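/- arXiv:2411.17277 — 3 statements merged into one kernel-verified Lean document; each statement's English description precedes it below -/
import Mathlib

section
/- Let x, y : ℝ≥0 → ℝⁿ be solutions of ẋ = f(x) + g(x)u(t−D) and ẏ = f(y) + g(y)u(t−D̂) with x(0) = y(0), where f is Lipschitz with constant L_f, g is Lipschitz with constant L_g, ‖u(t)‖ ≤ u_max for all t, and ‖u(t−D) − u(t−D̂)‖ ≤ ε_max for all t. Then the error e(t) = x(t) − y(t) satisfies ‖e(t)‖ ≤ ε_max ∫₀ᵗ e^{a(t−τ)} ‖g(y(τ))‖ dτ, where a = L_f + L_g(u_max + ε_max). -/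
/-!
The error `e = x - y` vanishes at `0`, and splitting `ė` into the mismatches of `f`, of `g` and of
the delayed input gives `‖ė‖ ≤ a ‖e‖ + εmax ‖g(y)‖`. The stated integral is the solution `B` of
`B' = a B + εmax ‖g(y)‖`, `B(0) = 0`; the strict comparison lemma applies to `B + δ e^{(a+1)t}`,
and `δ → 0` gives `‖e‖ ≤ B`.
-/

open Set Real
open scoped NNReal

section

variable {E : Type*} [NormedAddCommGroup E] [NormedSpace ℝ E]

theorem hasDerivWithinAt_integral_Icc_of_continuousOn [CompleteSpace E] {φ : ℝ → E} {a b t : ℝ}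
    (hφ : ContinuousOn φ (Icc a b)) (ht : t ∈ Icc a b) :
    HasDerivWithinAt (fun s => ∫ τ in a..s, φ τ) (φ t) (Icc a b) t := by
  have : Fact (t ∈ Icc a b) := ⟨ht⟩
  exact intervalIntegral.integral_hasDerivWithinAt_right
    (hφ.mono (uIcc_subset_Icc (left_mem_Icc.2 (ht.1.trans ht.2)) ht)).intervalIntegrable
    (hφ.stronglyMeasurableAtFilter_nhdsWithin measurableSet_Icc t) (hφ t ht)

theorem hasDerivWithinAt_integral_exp_mul_sub {φ : ℝ → ℝ} {K a b t : ℝ}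
    (hφ : ContinuousOn φ (Icc a b)) (ht : t ∈ Icc a b) :
    HasDerivWithinAt (fun s => ∫ τ in a..s, exp (K * (s - τ)) * φ τ)
      (K * (∫ τ in a..t, exp (K * (t - τ)) * φ τ) + φ t) (Icc a b) t := by
  have hsplit : ∀ s, ∫ τ in a..s, exp (K * (s - τ)) * φ τ
      = exp (K * s) * ∫ τ in a..s, exp (-(K * τ)) * φ τ := fun s => by
    rw [← intervalIntegral.integral_const_mul]
    congr 1 with τ
    rw [← mul_assoc, ← exp_add, mul_sub, sub_eq_add_neg]
  have hexp : HasDerivWithinAt (fun s => exp (K * s)) (exp (K * t) * K) (Icc a b) t :=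
    ((hasDerivAt_id t).const_mul K).exp.hasDerivWithinAt.congr_deriv (by simp)
  have hint := hasDerivWithinAt_integral_Icc_of_continuousOn
    (φ := fun τ => exp (-(K * τ)) * φ τ)
    ((by fun_prop : Continuous fun τ => exp (-(K * τ))).continuousOn.mul hφ) ht
  simp only [hsplit]
  refine (hexp.mul hint).congr_deriv ?_
  rw [← mul_assoc, ← exp_add, add_neg_cancel, exp_zero, one_mul]
  ring

theorem image_norm_le_of_norm_deriv_right_le_linear_boundary {e e' : ℝ → E} {B φ : ℝ → ℝ}
    {K a b : ℝ}
    (he : ContinuousOn e (Icc a b)) (he' : ∀ t ∈ Ico a b, HasDerivWithinAt e (e' t) (Ici t) t)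
    (hB : ContinuousOn B (Icc a b))
    (hB' : ∀ t ∈ Ico a b, HasDerivWithinAt B (K * B t + φ t) (Ici t) t)
    (ha : ‖e a‖ ≤ B a) (bound : ∀ t ∈ Ico a b, ‖e' t‖ ≤ K * ‖e t‖ + φ t) :
    ∀ ⦃t⦄, t ∈ Icc a b → ‖e t‖ ≤ B t := by
  have hδ : ∀ δ > 0, ∀ t ∈ Icc a b, ‖e t‖ ≤ B t + δ * exp ((K + 1) * (t - a)) := by
    intro δ hδ
    have hexp : ∀ t, HasDerivAt (fun s => δ * exp ((K + 1) * (s - a)))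
        (δ * exp ((K + 1) * (t - a)) * (K + 1)) t := fun t => by
      refine ((((hasDerivAt_id t).sub_const a).const_mul (K + 1)).exp.const_mul δ).congr_deriv ?_
      simp only [id, mul_one]; ring
    refine image_norm_le_of_norm_deriv_right_lt_deriv_boundary' he he' ?_
      (hB.add (fun t _ => (hexp t).continuousAt.continuousWithinAt))
      (fun t ht => (hB' t ht).add (hexp t).hasDerivWithinAt) ?_
    · simpa using ha.trans (le_add_of_nonneg_right hδ.le)
    · intro t ht heq
      have : 0 < δ * exp ((K + 1) * (t - a)) := by positivity
      calc ‖e' t‖ ≤ K * ‖e t‖ + φ t := bound t ht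
        _ < _ := by rw [heq]; nlinarith
  intro t ht
  refine le_of_forall_pos_le_add fun ε hε => ?_
  have hc : 0 < exp ((K + 1) * (t - a)) := exp_pos _
  simpa [div_mul_cancel₀ ε hc.ne'] using hδ (ε / exp ((K + 1) * (t - a))) (by positivity) t ht

theorem norm_le_integral_exp_mul_of_norm_deriv_right_le {e e' : ℝ → E} {φ : ℝ → ℝ} {K a b : ℝ}
    (he : ContinuousOn e (Icc a b)) (he' : ∀ t ∈ Ico a b, HasDerivWithinAt e (e' t) (Ici t) t)
    (hφ : ContinuousOn φ (Icc a b)) (ha : e a = 0)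
    (bound : ∀ t ∈ Ico a b, ‖e' t‖ ≤ K * ‖e t‖ + φ t) :
    ∀ ⦃t⦄, t ∈ Icc a b → ‖e t‖ ≤ ∫ τ in a..t, exp (K * (t - τ)) * φ τ := by
  have hB := fun t (ht : t ∈ Icc a b) => hasDerivWithinAt_integral_exp_mul_sub (K := K) hφ ht
  refine image_norm_le_of_norm_deriv_right_le_linear_boundary he he'
    (fun t ht => (hB t ht).continuousWithinAt) (fun t ht => ?_) (by simp [ha]) bound
  exact (hB t (Ico_subset_Icc_self ht)).mono_of_mem_nhdsWithin
    (Filter.mem_of_superset (Icc_mem_nhdsGE ht.2) (Icc_subset_Icc_left ht.1))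

end

theorem norm_controlAffine_sub_le {𝕜 F U : Type*} [NontriviallyNormedField 𝕜]
    [NormedAddCommGroup F] [NormedSpace 𝕜 F] [NormedAddCommGroup U] [NormedSpace 𝕜 U]
    {f : F → F} {g : F → U →L[𝕜] F} {Lf Lg : ℝ≥0} (hf : LipschitzWith Lf f)
    (hg : LipschitzWith Lg g) (p q : F) (v w : U) :
    ‖(f p + g p v) - (f q + g q w)‖ ≤ (Lf + Lg * ‖v‖) * ‖p - q‖ + ‖g q‖ * ‖v - w‖ := by
  have hsplit : (f p + g p v) - (f q + g q w) = (f p - f q) + (g p - g q) v + g q (v - w) := by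
    simp only [sub_apply, map_sub]; abel
  have hgv : ‖(g p - g q) v‖ ≤ Lg * ‖p - q‖ * ‖v‖ :=
    ((g p - g q).le_opNorm v).trans <| by
      gcongr; simpa [dist_eq_norm] using hg.dist_le_mul p q
  calc ‖(f p + g p v) - (f q + g q w)‖
      ≤ ‖f p - f q‖ + ‖(g p - g q) v‖ + ‖g q (v - w)‖ := by rw [hsplit]; exact norm_add₃_le
    _ ≤ Lf * ‖p - q‖ + Lg * ‖p - q‖ * ‖v‖ + ‖g q‖ * ‖v - w‖ := by
        gcongr
        · simpa [dist_eq_norm] using hf.dist_le_mul p q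
        · exact (g q).le_opNorm _
    _ = _ := by ring

/-- Grönwall-type bound on the error between solutions with true
and estimated input delay. -/
theorem stmt_1 (n m : ℕ)
    (f : EuclideanSpace ℝ (Fin n) → EuclideanSpace ℝ (Fin n))
    (g : EuclideanSpace ℝ (Fin n) → (EuclideanSpace ℝ (Fin m) →L[ℝ] EuclideanSpace ℝ (Fin n)))
    (Lf Lg : ℝ≥0) (hf : LipschitzWith Lf f) (hg : LipschitzWith Lg g)
    (u : ℝ → EuclideanSpace ℝ (Fin m)) (umax εmax : ℝ)
    (hu : ∀ t : ℝ, ‖u t‖ ≤ umax)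
    (D Dhat : ℝ)
    (hε : ∀ t : ℝ, ‖u (t - D) - u (t - Dhat)‖ ≤ εmax)
    (x y : ℝ → EuclideanSpace ℝ (Fin n))
    (hx : ∀ t : ℝ, 0 ≤ t → HasDerivAt x (f (x t) + g (x t) (u (t - D))) t)
    (hy : ∀ t : ℝ, 0 ≤ t → HasDerivAt y (f (y t) + g (y t) (u (t - Dhat))) t)
    (h0 : x 0 = y 0)
    (a : ℝ) (ha : a = (Lf : ℝ) + (Lg : ℝ) * (umax + εmax)) :
    ∀ t : ℝ, 0 ≤ t →
      ‖x t - y t‖ ≤ εmax * ∫ τ in (0:ℝ)..t, Real.exp (a * (t - τ)) * ‖g (y τ)‖ := by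
  intro T hT
  have hεmax : 0 ≤ εmax := (norm_nonneg _).trans (hε 0)
  have hxy : ∀ t ∈ Icc (0 : ℝ) T, HasDerivAt (x - y)
      (f (x t) + g (x t) (u (t - D)) - (f (y t) + g (y t) (u (t - Dhat)))) t :=
    fun t ht => (hx t ht.1).sub (hy t ht.1)
  have hgy : ContinuousOn (fun t => εmax * ‖g (y t)‖) (Icc 0 T) := fun t ht =>
    (continuous_const.mul (continuous_norm.comp hg.continuous)).continuousAt.comp
      (hy t ht.1).continuousAt |>.continuousWithinAt
  have bound : ∀ t ∈ Ico (0 : ℝ) T,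
      ‖f (x t) + g (x t) (u (t - D)) - (f (y t) + g (y t) (u (t - Dhat)))‖
        ≤ a * ‖(x - y) t‖ + εmax * ‖g (y t)‖ := fun t _ =>
    calc _ ≤ (Lf + Lg * ‖u (t - D)‖) * ‖x t - y t‖ + ‖g (y t)‖ * ‖u (t - D) - u (t - Dhat)‖ :=
          norm_controlAffine_sub_le hf hg _ _ _ _
      _ ≤ a * ‖(x - y) t‖ + εmax * ‖g (y t)‖ := by
          rw [ha, Pi.sub_apply, mul_comm εmax]
          gcongr
          · linarith [hu (t - D), mul_nonneg Lg.coe_nonneg hεmax]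
          · exact hε t
  have hgronwall := norm_le_integral_exp_mul_of_norm_deriv_right_le (K := a)
    (fun t ht => (hxy t ht).continuousAt.continuousWithinAt)
    (fun t ht => (hxy t (Ico_subset_Icc_self ht)).hasDerivWithinAt) hgy
    (by simp [h0]) bound (right_mem_Icc.2 hT)
  simpa only [Pi.sub_apply, mul_left_comm _ εmax, intervalIntegral.integral_const_mul]
    using hgronwall
end

section
/- Suppose h : ℝⁿ → ℝ is continuously differentiable, α : ℝ → ℝ is locally Lipschitz with α(0) = 0 and strictly increasing, and ĥ(t) := h(x̂_p(t)) is absolutely continuous with ĥ'(t) ≥ −α(ĥ(t)) for almost all t and ĥ(0) ≥ 0. Then ĥ(t) ≥ 0 for all t ≥ 0. -/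
open MeasureTheory Set

/-- comparison-lemma forward invariance of the safe set along a
barrier value satisfying ḣ ≥ −α(h) (absolute continuity encoded via the
fundamental theorem of calculus for the a.e. derivative). -/
theorem stmt_16 (n : ℕ)
    (h : EuclideanSpace ℝ (Fin n) → ℝ) (hh : ContDiff ℝ 1 h)
    (xp : ℝ → EuclideanSpace ℝ (Fin n))
    (α : ℝ → ℝ) (hα : LocallyLipschitz α) (hα0 : α 0 = 0) (hαmono : StrictMono α)
    (hFTC : ∀ s t : ℝ, 0 ≤ s → s ≤ t →
      h (xp t) - h (xp s) = ∫ τ in s..t, deriv (fun r => h (xp r)) τ)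
    (hineq : ∀ᵐ τ : ℝ, 0 ≤ τ → deriv (fun r => h (xp r)) τ ≥ -α (h (xp τ)))
    (h0 : 0 ≤ h (xp 0)) :
    ∀ t : ℝ, 0 ≤ t → 0 ≤ h (xp t) := by
  intro t ht
  by_contra hneg
  push_neg at hneg
  set g : ℝ → ℝ := deriv (fun r => h (xp r)) with hg
  by_cases hint : IntervalIntegrable g volume 0 t
  · -- the primitive is continuous on [0, t]
    have huIcc : uIcc (0:ℝ) t = Icc 0 t := uIcc_of_le ht
    have hcontP : ContinuousOn (fun s => ∫ τ in (0:ℝ)..s, g τ) (Icc 0 t) := by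
      rw [← huIcc]
      exact intervalIntegral.continuousOn_primitive_interval' hint
        (by rw [huIcc]; exact ⟨le_rfl, ht⟩)
    have hcont : ContinuousOn (fun s => h (xp s)) (Icc 0 t) := by
      have : ∀ s ∈ Icc (0:ℝ) t, h (xp s) = h (xp 0) + ∫ τ in (0:ℝ)..s, g τ := by
        intro s hs
        have := hFTC 0 s le_rfl hs.1
        linarith
      exact ContinuousOn.congr (continuousOn_const.add hcontP) this
    set S : Set ℝ := {s | s ∈ Icc (0:ℝ) t ∧ 0 ≤ h (xp s)} with hS
    have hS0 : (0:ℝ) ∈ S := ⟨⟨le_rfl, ht⟩, h0⟩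
    have hSne : S.Nonempty := ⟨0, hS0⟩
    have hSbdd : BddAbove S := ⟨t, fun s hs => hs.1.2⟩
    set t₀ : ℝ := sSup S with ht₀
    have ht₀0 : 0 ≤ t₀ := le_csSup hSbdd hS0
    have ht₀t : t₀ ≤ t := csSup_le hSne (fun s hs => hs.1.2)
    -- h (xp t₀) ≥ 0 by continuity
    have ht₀mem : t₀ ∈ Icc (0:ℝ) t := ⟨ht₀0, ht₀t⟩
    have hclos : t₀ ∈ closure S := csSup_mem_closure hSne hSbdd
    have h0t₀ : 0 ≤ h (xp t₀) := by
      have hcwa : ContinuousWithinAt (fun s => h (xp s)) S t₀ :=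
        (hcont t₀ ht₀mem).mono (fun s hs => hs.1)
      have himg : h (xp t₀) ∈ closure ((fun s => h (xp s)) '' S) :=
        hcwa.mem_closure_image hclos
      have hsub : (fun s => h (xp s)) '' S ⊆ Ici 0 := by
        rintro _ ⟨s, hs, rfl⟩; exact hs.2
      have := (isClosed_Ici.closure_subset_iff.mpr hsub) himg
      exact this
    -- on (t₀, t], h(xp τ) < 0, so g ≥ 0 a.e. there
    have hae : 0 ≤ᵐ[volume.restrict (Icc t₀ t)] g := by
      have h1 : ∀ᵐ τ ∂(volume.restrict (Icc t₀ t)),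
          0 ≤ τ → g τ ≥ -α (h (xp τ)) := ae_restrict_of_ae hineq
      have h2 : ∀ᵐ τ ∂(volume.restrict (Icc t₀ t)), τ ∈ Ioc t₀ t := by
        have : (Icc t₀ t : Set ℝ) =ᵐ[volume] Ioc t₀ t := (Ioc_ae_eq_Icc (μ := volume)).symm
        rw [Measure.restrict_congr_set this]
        exact ae_restrict_mem measurableSet_Ioc
      filter_upwards [h1, h2] with τ h1 h2
      have hτ0 : 0 ≤ τ := le_trans ht₀0 h2.1.le
      have hτneg : h (xp τ) < 0 := by
        by_contra hc
        push_neg at hc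
        have : τ ∈ S := ⟨⟨hτ0, h2.2⟩, hc⟩
        exact absurd (le_csSup hSbdd this) (not_le.mpr h2.1)
      have : α (h (xp τ)) < 0 := by
        have := hαmono hτneg
        rwa [hα0] at this
      have := h1 hτ0
      simp only [Pi.zero_apply]
      linarith
    have hge : 0 ≤ ∫ τ in t₀..t, g τ :=
      intervalIntegral.integral_nonneg_of_ae_restrict ht₀t hae
    have := hFTC t₀ t ht₀0 ht₀t
    linarith
  · -- non-integrable case: the interval integral vanishes
    have := hFTC 0 t le_rfl ht
    rw [intervalIntegral.integral_undef hint] at this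
    linarith
end

section
/- Let h : ℝⁿ → ℝ with L_f h Lipschitz with constant L₁, L_g h Lipschitz with constant L₂, and α∘h Lipschitz with constant L₃. If ‖x̂ − x‖ ≤ e_max and the robust condition L_f h(x̂) + L_g h(x̂)u − (L₁ + L₃)e_max − L₂ e_max ‖u‖ ≥ −α(h(x̂)) holds, then L_f h(x) + L_g h(x)u ≥ −α(h(x)). -/
open scoped NNReal

/-- the robustified DaCBF condition at the predicted state
implies the true CBF condition at the actual state. -/
theorem stmt_17 (n m : ℕ)
    (Lfh : EuclideanSpace ℝ (Fin n) → ℝ)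
    (Lgh : EuclideanSpace ℝ (Fin n) → (EuclideanSpace ℝ (Fin m) →L[ℝ] ℝ))
    (αh : EuclideanSpace ℝ (Fin n) → ℝ)
    (L₁ L₂ L₃ : ℝ≥0)
    (h₁ : LipschitzWith L₁ Lfh) (h₂ : LipschitzWith L₂ Lgh) (h₃ : LipschitzWith L₃ αh)
    (xhat x : EuclideanSpace ℝ (Fin n)) (u : EuclideanSpace ℝ (Fin m))
    (emax : ℝ) (he : ‖xhat - x‖ ≤ emax)
    (hrobust : Lfh xhat + Lgh xhat u - ((L₁ : ℝ) + (L₃ : ℝ)) * emax -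
      (L₂ : ℝ) * emax * ‖u‖ ≥ -αh xhat) :
    Lfh x + Lgh x u ≥ -αh x := by
  have hL1 : |Lfh xhat - Lfh x| ≤ (L₁ : ℝ) * emax := by
    have := h₁.dist_le_mul xhat x
    rw [Real.dist_eq, dist_eq_norm] at this
    exact this.trans (by nlinarith [norm_nonneg (xhat - x), L₁.coe_nonneg])
  have hL3 : |αh xhat - αh x| ≤ (L₃ : ℝ) * emax := by
    have := h₃.dist_le_mul xhat x
    rw [Real.dist_eq, dist_eq_norm] at this
    exact this.trans (by nlinarith [norm_nonneg (xhat - x), L₃.coe_nonneg])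
  have hL2 : |Lgh xhat u - Lgh x u| ≤ (L₂ : ℝ) * emax * ‖u‖ := by
    have hd : ‖Lgh xhat - Lgh x‖ ≤ (L₂ : ℝ) * emax := by
      have := h₂.dist_le_mul xhat x
      rw [dist_eq_norm, dist_eq_norm] at this
      exact this.trans (by nlinarith [norm_nonneg (xhat - x), L₂.coe_nonneg])
    calc |Lgh xhat u - Lgh x u| = ‖(Lgh xhat - Lgh x) u‖ := by
          simp [Real.norm_eq_abs]
      _ ≤ ‖Lgh xhat - Lgh x‖ * ‖u‖ := (Lgh xhat - Lgh x).le_opNorm u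
      _ ≤ (L₂ : ℝ) * emax * ‖u‖ := by
          apply mul_le_mul_of_nonneg_right hd (norm_nonneg u)
  rw [abs_le] at hL1 hL2 hL3
  linarith [hL1.1, hL1.2, hL2.1, hL2.2, hL3.1, hL3.2]
end
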